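/- arXiv:2103.15620 — 8 statements merged into one kernel-verified Lean document; each statement's English description precedes it below -/
import Mathlib

section
/- For every n ≥ 1 and every probability distribution p = (p_1, ..., p_n) with p_1 ≥ p_2 ≥ ... ≥ p_n > 0 and Σ_{i=1}^n p_i = 1, the guessing entropy satisfies E[G(p)] ≥ (1/e)·2^{H(p)} + 1/2, where H(p) is the Shannon entropy in bits. -/
/-- Shannon entropy in bits. -/
noncomputable def shannonEntropy {n : ℕ} (p : Fin n → ℝ) : ℝ :=
  -∑ i, p i * Real.logb 2 (p i)

/-- Guessing entropy: expected number of guesses (indices counted from 1). -/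
noncomputable def guessingEntropy {n : ℕ} (p : Fin n → ℝ) : ℝ :=
  ∑ i : Fin n, (((i : ℕ) : ℝ) + 1) * p i

theorem rioul_improved (n : ℕ) (hn : 1 ≤ n) (p : Fin n → ℝ)
    (hdesc : ∀ i j : Fin n, i ≤ j → p j ≤ p i)
    (hpos : ∀ i, 0 < p i)
    (hsum : ∑ i, p i = 1) :
    guessingEntropy p ≥
      (1 / Real.exp 1) * (2 : ℝ) ^ (shannonEntropy p) + 1 / 2 := by
  have hne : (Finset.univ : Finset (Fin n)).Nonempty := by
    have : 0 < n := hn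
    exact Finset.univ_nonempty_iff.mpr (Fin.pos_iff_nonempty.mp this)
  set G := guessingEntropy p with hGdef
  -- G ≥ 1
  have hG1 : (1:ℝ) ≤ G := by
    rw [hGdef, guessingEntropy, ← hsum]
    apply Finset.sum_le_sum
    intro i _
    have hi : (0:ℝ) ≤ ((i:ℕ):ℝ) := Nat.cast_nonneg _
    nlinarith [hpos i]
  have hGhalf : (0:ℝ) < G - 1/2 := by linarith
  set l : ℝ := 1 / (G - 1/2) with hldef
  have hl : 0 < l := by positivity
  -- natural-log entropy
  set Hn : ℝ := -∑ i, p i * Real.log (p i) with hHn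
  clear_value G l Hn
  have hlog2 : Real.log 2 ≠ 0 := by
    have := Real.log_pos (by norm_num : (1:ℝ) < 2); linarith
  have hpow : (2:ℝ) ^ (shannonEntropy p) = Real.exp Hn := by
    rw [Real.rpow_def_of_pos (by norm_num : (0:ℝ) < 2)]
    congr 1
    rw [shannonEntropy, hHn]
    have : ∀ i : Fin n, p i * Real.logb 2 (p i) = (p i * Real.log (p i)) / Real.log 2 := by
      intro i; rw [Real.logb]; ring
    rw [Finset.sum_congr rfl (fun i _ => this i)]
    rw [← Finset.sum_div]
    field_simp
  -- weights
  set q : Fin n → ℝ := fun i => Real.exp (-(l * (((i:ℕ):ℝ) + 1))) with hq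
  have hqpos : ∀ i, 0 < q i := fun i => Real.exp_pos _
  set S : ℝ := ∑ i, q i with hS
  have hSpos : 0 < S := Finset.sum_pos (fun i _ => hqpos i) hne
  clear_value q S
  -- Gibbs: ∑ p i * log (q i / p i) ≤ log S
  have gibbs : ∑ i, p i * Real.log (q i / p i) ≤ Real.log S := by
    have key : ∀ i : Fin n, p i * Real.log (q i / p i) ≤ q i / S - p i + p i * Real.log S := by
      intro i
      have hpi := hpos i
      have hqSp : 0 < q i / (S * p i) := div_pos (hqpos i) (mul_pos hSpos hpi)
      have h1 : Real.log (q i / (S * p i)) ≤ q i / (S * p i) - 1 :=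
        Real.log_le_sub_one_of_pos hqSp
      have h2 : Real.log (q i / p i) = Real.log (q i / (S * p i)) + Real.log S := by
        rw [← Real.log_mul (ne_of_gt hqSp) (ne_of_gt hSpos)]
        congr 1
        field_simp
      rw [h2]
      have h3 : p i * Real.log (q i / (S * p i)) ≤ p i * (q i / (S * p i) - 1) :=
        mul_le_mul_of_nonneg_left h1 (le_of_lt hpi)
      have h4 : p i * (q i / (S * p i) - 1) = q i / S - p i := by
        field_simp
      nlinarith [h3]
    calc ∑ i, p i * Real.log (q i / p i)
        ≤ ∑ i, (q i / S - p i + p i * Real.log S) := Finset.sum_le_sum (fun i _ => key i)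
      _ = (∑ i, q i) / S - (∑ i, p i) + (∑ i, p i) * Real.log S := by
          rw [Finset.sum_add_distrib, Finset.sum_sub_distrib, ← Finset.sum_div,
            ← Finset.sum_mul]
      _ = Real.log S := by
          rw [hsum, ← hS, div_self (ne_of_gt hSpos)]; ring
  -- rewrite LHS of gibbs
  have hrw : ∑ i, p i * Real.log (q i / p i) = -(l * G) + Hn := by
    have hptw : ∀ i : Fin n, p i * Real.log (q i / p i) =
        -(l * ((((i:ℕ):ℝ) + 1) * p i)) - p i * Real.log (p i) := by
      intro i
      have : q i = Real.exp (-(l * (((i:ℕ):ℝ) + 1))) := by rw [hq]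
      rw [this, Real.log_div (ne_of_gt (Real.exp_pos _)) (ne_of_gt (hpos i)), Real.log_exp]
      ring
    rw [Finset.sum_congr rfl (fun i _ => hptw i), Finset.sum_sub_distrib,
      Finset.sum_neg_distrib, hHn, hGdef, guessingEntropy, Finset.mul_sum]
    ring
  -- geometric sum bound: S ≤ 1 / (exp l - 1)
  have hr : Real.exp (-l) < 1 := by
    rw [Real.exp_lt_one_iff]; linarith
  have hrpos : 0 < Real.exp (-l) := Real.exp_pos _
  have hexp1 : (1:ℝ) < Real.exp l := by
    rw [← Real.exp_zero]
    exact Real.exp_lt_exp.mpr hl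
  have hgeom : S ≤ 1 / (Real.exp l - 1) := by
    set r := Real.exp (-l) with hrdef
    have hqr : ∀ i : Fin n, q i = r * r ^ (i:ℕ) := by
      intro i
      have : q i = Real.exp (-(l * (((i:ℕ):ℝ) + 1))) := by rw [hq]
      rw [this, hrdef, ← Real.exp_nat_mul, ← Real.exp_add]
      ring_nf
    have hS' : S = r * ∑ i : Fin n, r ^ (i:ℕ) := by
      rw [hS, Finset.mul_sum]
      exact Finset.sum_congr rfl (fun i _ => hqr i)
    have hsum' : ∑ i : Fin n, r ^ (i:ℕ) = ∑ i ∈ Finset.range n, r ^ i :=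
      Fin.sum_univ_eq_sum_range (fun i => r ^ i) n
    have h1r : 0 < 1 - r := by linarith
    have hgs : ∑ i ∈ Finset.range n, r ^ i ≤ 1 / (1 - r) := by
      have hgeq : (r ^ n - 1) / (r - 1) = (1 - r ^ n) / (1 - r) := by
        rw [← neg_div_neg_eq]; ring_nf
      rw [geom_sum_eq (ne_of_lt hr) n, hgeq, div_le_div_iff₀ h1r h1r]
      nlinarith [pow_nonneg (le_of_lt hrpos) n]
    have hrl : r * Real.exp l = 1 := by
      rw [hrdef, ← Real.exp_add]; simp
    have heq : r * (1 / (1 - r)) = 1 / (Real.exp l - 1) := by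
      rw [mul_one_div, div_eq_div_iff (ne_of_gt h1r) (by linarith : Real.exp l - 1 ≠ 0)]
      linear_combination hrl
    rw [hS', hsum']
    calc r * ∑ i ∈ Finset.range n, r ^ i ≤ r * (1 / (1 - r)) :=
          mul_le_mul_of_nonneg_left hgs (le_of_lt hrpos)
      _ = 1 / (Real.exp l - 1) := heq
  -- sinh bound: l * exp (l/2) ≤ exp l - 1
  have hsinh : l * Real.exp (l/2) ≤ Real.exp l - 1 := by
    have h := Real.self_lt_sinh_iff.mpr (by positivity : 0 < l/2)
    rw [Real.sinh_eq] at h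
    have he : 0 < Real.exp (l/2) := Real.exp_pos _
    have h1 : Real.exp (l/2) * Real.exp (l/2) = Real.exp l := by
      rw [← Real.exp_add]; ring_nf
    have h2 : Real.exp (l/2) * Real.exp (-(l/2)) = 1 := by
      rw [← Real.exp_add]; simp
    nlinarith
  have hSle : S ≤ 1 / (l * Real.exp (l/2)) := by
    have h1 : 0 < l * Real.exp (l/2) := by positivity
    calc S ≤ 1 / (Real.exp l - 1) := hgeom
      _ ≤ 1 / (l * Real.exp (l/2)) := by
          apply one_div_le_one_div_of_le h1 hsinh
  -- log S ≤ -log l - l/2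
  have hlogS : Real.log S ≤ -Real.log l - l/2 := by
    calc Real.log S ≤ Real.log (1 / (l * Real.exp (l/2))) :=
          Real.log_le_log hSpos hSle
      _ = -Real.log l - l/2 := by
          rw [one_div, Real.log_inv, Real.log_mul (ne_of_gt hl) (ne_of_gt (Real.exp_pos _)),
            Real.log_exp]
          ring
  -- combine: Hn ≤ l*G - log l - l/2 = 1 + log (G - 1/2)
  have hmain : Hn ≤ 1 + Real.log (G - 1/2) := by
    have h1 : -(l * G) + Hn ≤ -Real.log l - l/2 := by
      rw [← hrw]; exact le_trans gibbs hlogS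
    have h2 : l * (G - 1/2) = 1 := by
      rw [hldef]; exact one_div_mul_cancel (ne_of_gt hGhalf)
    have h3 : Real.log l = -Real.log (G - 1/2) := by
      rw [hldef, one_div, Real.log_inv]
    nlinarith [h1, h3]
  -- conclude
  have hfin : Real.exp Hn ≤ Real.exp 1 * (G - 1/2) := by
    calc Real.exp Hn ≤ Real.exp (1 + Real.log (G - 1/2)) := Real.exp_le_exp.mpr hmain
      _ = Real.exp 1 * (G - 1/2) := by
          rw [Real.exp_add, Real.exp_log hGhalf]
  rw [ge_iff_le, hpow]
  have he1 : 0 < Real.exp 1 := Real.exp_pos 1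
  rw [div_mul_eq_mul_div, one_mul, div_add' _ _ _ (ne_of_gt he1), div_le_iff₀ he1]
  nlinarith [hfin]
end

section
/- For every real μ > 1, log₂(μ - 1/2) + log₂ e ≥ log₂(μ - 1) - μ·log₂(1 - 1/μ); equivalently, in natural logarithms, ln(μ - 1/2) + 1 ≥ ln(μ - 1) - μ·ln(1 - 1/μ). -/
/-!
Put `s = 1 / (2 (μ - 1))`, so that `μ = 1 + 1 / (2 s)`, `(μ - 1/2) / (μ - 1) = 1 + s` and
`μ / (μ - 1) = 1 + 2 s`. After multiplying by `2 s`, the natural-log inequality becomes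
`(2 s + 1) log (1 + 2 s) ≤ 2 s (1 + log (1 + s))`. Both sides vanish at `s = 0`, and the
derivative of the difference is `2 (s / (1 + s) - log ((1 + 2 s) / (1 + s)))`, which is
nonnegative by `log y ≤ y - 1`.
-/

open Real Set

lemma log_one_add_two_mul_sub_log_one_add_le {s : ℝ} (h2 : 0 < 1 + 2 * s) :
    log (1 + 2 * s) - log (1 + s) ≤ s / (1 + s) := by
  have h1 : 0 < 1 + s := by linarith
  calc log (1 + 2 * s) - log (1 + s) = log ((1 + 2 * s) / (1 + s)) :=
        (log_div h2.ne' h1.ne').symm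
    _ ≤ (1 + 2 * s) / (1 + s) - 1 := log_le_sub_one_of_pos (by positivity)
    _ = s / (1 + s) := by field_simp; ring

lemma hasDerivAt_two_mul_one_add_log_one_add_sub {s : ℝ} (hs : 0 < 1 + 2 * s) :
    HasDerivAt (fun x ↦ 2 * x * (1 + log (1 + x)) - (2 * x + 1) * log (1 + 2 * x))
      (2 * (s / (1 + s) - (log (1 + 2 * s) - log (1 + s)))) s := by
  have h1 : 1 + s ≠ 0 := by linarith
  have h2 : 1 + 2 * s ≠ 0 := by linarith
  have hlog1 : HasDerivAt (fun x ↦ log (1 + x)) (1 / (1 + s)) s := by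
    simpa using ((hasDerivAt_id s).const_add 1).log h1
  have hlog2 : HasDerivAt (fun x ↦ log (1 + 2 * x)) (2 / (1 + 2 * s)) s := by
    simpa using (((hasDerivAt_id s).const_mul 2).const_add 1).log h2
  have hlin : HasDerivAt (fun x : ℝ ↦ 2 * x) 2 s := by
    simpa using (hasDerivAt_id s).const_mul 2
  refine ((hlin.mul (hlog1.const_add 1)).sub ((hlin.add_const 1).mul hlog2)).congr_deriv ?_
  field_simp
  ring

lemma two_mul_add_one_mul_log_le {s : ℝ} (hs : 0 ≤ s) :
    (2 * s + 1) * log (1 + 2 * s) ≤ 2 * s * (1 + log (1 + s)) := by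
  set f : ℝ → ℝ := fun x ↦ 2 * x * (1 + log (1 + x)) - (2 * x + 1) * log (1 + 2 * x)
  have hderiv : ∀ x ∈ Ici (0 : ℝ), HasDerivAt f
      (2 * (x / (1 + x) - (log (1 + 2 * x) - log (1 + x)))) x :=
    fun x (hx : 0 ≤ x) ↦ hasDerivAt_two_mul_one_add_log_one_add_sub (by linarith)
  have hmono : MonotoneOn f (Ici 0) := by
    refine monotoneOn_of_deriv_nonneg (convex_Ici 0)
      (fun x hx ↦ (hderiv x hx).continuousAt.continuousWithinAt)
      (fun x hx ↦ (hderiv x (interior_subset hx)).differentiableAt.differentiableWithinAt)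
      fun x hx ↦ ?_
    rw [(hderiv x (interior_subset hx)).deriv]
    have hx : (0 : ℝ) ≤ x := interior_subset hx
    have := log_one_add_two_mul_sub_log_one_add_le (s := x) (by linarith)
    linarith
  have := hmono self_mem_Ici hs hs
  simp only [f, mul_zero, zero_mul, add_zero, log_one, zero_add, sub_zero] at this
  linarith

lemma log_sub_one_sub_mul_log_one_sub_inv_le {μ : ℝ} (hμ : 1 < μ) :
    log (μ - 1) - μ * log (1 - 1 / μ) ≤ log (μ - 1 / 2) + 1 := by
  have hμ0 : 0 < μ := by linarith
  have hμ1 : 0 < μ - 1 := by linarith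
  obtain ⟨s, hs⟩ : ∃ s, 2 * s * (μ - 1) = 1 := ⟨1 / (2 * (μ - 1)), by field_simp⟩
  have hs_ineq := two_mul_add_one_mul_log_le (s := s) (by nlinarith)
  have hlog_one_add : log (1 + s) = log (μ - 1 / 2) - log (μ - 1) := by
    rw [← log_div (by linarith) hμ1.ne']
    congr 1
    rw [eq_div_iff hμ1.ne']
    linear_combination hs / 2
  have hlog_one_add_two_mul : log (1 + 2 * s) = log μ - log (μ - 1) := by
    rw [← log_div hμ0.ne' hμ1.ne']
    congr 1
    rw [eq_div_iff hμ1.ne']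
    linear_combination hs
  have hlog_one_sub : log (1 - 1 / μ) = log (μ - 1) - log μ := by
    rw [← log_div hμ1.ne' hμ0.ne']
    congr 1
    field_simp
  rw [hlog_one_add, hlog_one_add_two_mul] at hs_ineq
  rw [hlog_one_sub]
  linear_combination mul_le_mul_of_nonneg_right hs_ineq hμ1.le
    + (1 + (log (μ - 1 / 2) - log (μ - 1)) - (log μ - log (μ - 1))) * hs

theorem asymptotically_optimal_bound_inequality (μ : ℝ) (hμ : 1 < μ) :
    Real.logb 2 (μ - 1/2) + Real.logb 2 (Real.exp 1) ≥
      Real.logb 2 (μ - 1) - μ * Real.logb 2 (1 - 1/μ) ∧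
    Real.log (μ - 1/2) + 1 ≥ Real.log (μ - 1) - μ * Real.log (1 - 1/μ) := by
  have hln := log_sub_one_sub_mul_log_one_sub_inv_le hμ
  refine ⟨?_, hln⟩
  simp only [logb, log_exp]
  rw [ge_iff_le, ← add_div, ← mul_div_assoc, ← sub_div]
  exact div_le_div_of_nonneg_right hln (log_pos one_lt_two).le
end

section
/- Let a > 0, b > 1 and c be real numbers such that for every real μ > 1, log_b((μ - c)/a) ≥ log₂(μ - 1) - μ·log₂(1 - 1/μ). Then b ≤ 2. -/
theorem optimal_base_le_two (a b c : ℝ) (ha : 0 < a) (hb : 1 < b)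
    (hbound : ∀ μ : ℝ, 1 < μ →
      Real.logb b ((μ - c) / a) ≥ Real.logb 2 (μ - 1) - μ * Real.logb 2 (1 - 1/μ)) :
    b ≤ 2 := by
  by_contra h
  push_neg at h
  -- key: for all n with c < 1 + 2^n, a * b^n ≤ 1 + 2^n - c
  have key : ∀ n : ℕ, c < 1 + 2 ^ n → a * b ^ n ≤ 1 + 2 ^ n - c := by
    intro n hc
    set μ : ℝ := 1 + 2 ^ n with hμdef
    have h2n : (0:ℝ) < 2 ^ n := by positivity
    have hμ : 1 < μ := by rw [hμdef]; linarith
    have hμ0 : 0 < μ := by linarith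
    have hB := hbound μ hμ
    have hx0 : (0:ℝ) ≤ 1 - 1/μ := by
      have : 1/μ ≤ 1 := by
        rw [div_le_one hμ0]; linarith
      linarith
    have hx1 : 1 - 1/μ ≤ 1 := by
      have : 0 < 1/μ := by positivity
      linarith
    have hlogneg : Real.logb 2 (1 - 1/μ) ≤ 0 := Real.logb_nonpos one_lt_two hx0 hx1
    have hterm : 0 ≤ -(μ * Real.logb 2 (1 - 1/μ)) := by nlinarith
    have hμ1 : μ - 1 = 2 ^ n := by simp [hμdef]
    have hlog2 : Real.logb 2 (μ - 1) = n := by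
      rw [hμ1, ← Real.rpow_natCast 2 n, Real.logb_rpow (by norm_num : (0:ℝ) < 2) (by norm_num)]
    have hge : (n : ℝ) ≤ Real.logb b ((μ - c) / a) := by
      have := hB
      rw [hlog2] at this
      linarith
    have hy0 : 0 < (μ - c) / a := by
      apply div_pos _ ha
      simp only [hμdef]; linarith
    have := (Real.le_logb_iff_rpow_le hb hy0).mp hge
    rw [Real.rpow_natCast] at this
    have : b ^ n * a ≤ μ - c := by
      rwa [← le_div_iff₀ ha]
    simp only [hμdef] at this
    nlinarith
  -- contradiction for large n
  have hr : 1 < b / 2 := by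
    rw [lt_div_iff₀ (by norm_num : (0:ℝ) < 2)]; linarith
  have h1 : Filter.Tendsto (fun n : ℕ => (b / 2) ^ n) Filter.atTop Filter.atTop :=
    tendsto_pow_atTop_atTop_of_one_lt hr
  have h2 : Filter.Tendsto (fun n : ℕ => (2:ℝ) ^ n) Filter.atTop Filter.atTop :=
    tendsto_pow_atTop_atTop_of_one_lt one_lt_two
  have hev := (h1.eventually (Filter.eventually_gt_atTop ((1 + |1 - c|) / a))).and
      (h2.eventually (Filter.eventually_gt_atTop c))
  obtain ⟨n, hn1, hn2⟩ := hev.exists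
  have hc : c < 1 + 2 ^ n := by have := hn2; linarith
  have hkey := key n hc
  have habs : 1 - c ≤ |1 - c| := le_abs_self _
  have h2n : (1:ℝ) ≤ 2 ^ n := one_le_pow₀ (by norm_num)
  have hub : 1 + 2 ^ n - c ≤ (1 + |1 - c|) * 2 ^ n := by nlinarith [abs_nonneg (1 - c)]
  have hlb : (1 + |1 - c|) * 2 ^ n < a * b ^ n := by
    have : (1 + |1 - c|) / a < (b / 2) ^ n := hn1
    have hbn : (b / 2) ^ n * 2 ^ n = b ^ n := by
      rw [← mul_pow]; ring_nf
    have h2np : (0:ℝ) < 2 ^ n := by positivity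
    rw [div_lt_iff₀ ha] at this
    nlinarith
  linarith
end

section
/- Let a > 0 and c be real numbers such that for every real μ > 1, log₂((μ - c)/a) ≥ log₂(μ - 1) - μ·log₂(1 - 1/μ). Then a ≤ 1/e. -/
theorem optimal_coefficient_le_inv_e (a c : ℝ) (ha : 0 < a)
    (hbound : ∀ μ : ℝ, 1 < μ →
      Real.logb 2 ((μ - c) / a) ≥ Real.logb 2 (μ - 1) - μ * Real.logb 2 (1 - 1/μ)) :
    a ≤ 1 / Real.exp 1 := by
  by_contra h
  push_neg at h
  set E := a * Real.exp 1 with hE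
  have hexp : (0:ℝ) < Real.exp 1 := Real.exp_pos 1
  have hE1 : 1 < E := by
    rw [hE]
    calc (1:ℝ) = (1 / Real.exp 1) * Real.exp 1 := by field_simp
    _ < a * Real.exp 1 := by apply mul_lt_mul_of_pos_right h hexp
  set μ : ℝ := max 2 (max (c + 1) ((E - c)/(E - 1) + 1)) with hμ
  have hμ1 : 1 < μ := lt_of_lt_of_le (by norm_num) (le_max_left _ _)
  have hμc : c < μ := by
    have : c + 1 ≤ μ := le_trans (le_max_left _ _) (le_max_right _ _)
    linarith
  have hμE : (E - c)/(E - 1) < μ := by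
    have : (E - c)/(E - 1) + 1 ≤ μ := le_trans (le_max_right _ _) (le_max_right _ _)
    linarith
  have hμpos : 0 < μ := by linarith
  have h1 : (0:ℝ) < 1 - 1/μ := by
    have : 1/μ < 1 := by
      rw [div_lt_one hμpos]; linarith
    linarith
  have hb := hbound μ hμ1
  have hlog2 : (0:ℝ) < Real.log 2 := Real.log_pos (by norm_num)
  rw [ge_iff_le, Real.logb, Real.logb, Real.logb] at hb
  have hb' : Real.log (μ - 1) - μ * Real.log (1 - 1/μ) ≤ Real.log ((μ - c)/a) := by
    have h2 : (Real.log (μ - 1) - μ * Real.log (1 - 1/μ))/Real.log 2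
        ≤ Real.log ((μ - c)/a)/Real.log 2 := by
      rw [sub_div, mul_div_assoc]; exact hb
    exact (div_le_div_iff_of_pos_right hlog2).mp h2
  -- log(1 - 1/μ) < -1/μ
  have hlt : Real.log (1 - 1/μ) < -(1/μ) := by
    have hne : (1 - 1/μ) ≠ 1 := by
      have : 1/μ > 0 := by positivity
      intro hcontra; rw [sub_eq_self] at hcontra; linarith
    have := Real.log_lt_sub_one_of_pos h1 hne
    linarith
  have hmul : 1 < -(μ * Real.log (1 - 1/μ)) := by
    have := mul_lt_mul_of_pos_left hlt hμpos
    have hμne : μ ≠ 0 := ne_of_gt hμpos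
    rw [mul_neg, mul_one_div, div_self hμne] at this
    linarith
  have hkey : Real.log (Real.exp 1 * (μ - 1)) < Real.log ((μ - c)/a) := by
    have hμ1' : (0:ℝ) < μ - 1 := by linarith
    rw [Real.log_mul (ne_of_gt hexp) (ne_of_gt hμ1'), Real.log_exp]
    linarith
  have hargpos : (0:ℝ) < Real.exp 1 * (μ - 1) := by
    have : (0:ℝ) < μ - 1 := by linarith
    positivity
  have hargpos2 : (0:ℝ) < (μ - c)/a := by
    apply div_pos (by linarith) ha
  have hfinal : Real.exp 1 * (μ - 1) < (μ - c)/a :=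
    (Real.log_lt_log_iff hargpos hargpos2).mp hkey
  -- so μ - c > E * (μ - 1)
  have hEμ : E * (μ - 1) < μ - c := by
    have := mul_lt_mul_of_pos_left hfinal ha
    rw [mul_div_cancel₀ _ (ne_of_gt ha)] at this
    calc E * (μ - 1) = a * (Real.exp 1 * (μ - 1)) := by ring
    _ < μ - c := this
  -- but μ > (E - c)/(E - 1) gives μ*(E-1) > E - c i.e. E*(μ-1) ≥ μ - c + ... contradiction
  have : E - c < μ * (E - 1) := by
    have hE1' : (0:ℝ) < E - 1 := by linarith
    rw [div_lt_iff₀ hE1'] at hμE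
    linarith
  nlinarith
end

section
/- Let c be a real number such that for every real μ > 1, log₂(e·(μ - c)) ≥ log₂(μ - 1) - μ·log₂(1 - 1/μ). Then c ≤ 1/2. -/
/-!
Over natural logarithms the hypothesis at `μ` reads `1 + log (μ - c) ≥ log (μ - 1) - μ log (1 - 1/μ)`,
and the Taylor series of `-log (1 - t)` gives `-μ log (1 - 1/μ) ≥ 1 + 1/(2μ)`. Exponentiating and
using `exp x ≥ 1 + x` yields `μ - c ≥ (μ - 1)(1 + 1/(2μ)) = μ - 1/2 - 1/(2μ)`, i.e.
`c ≤ 1/2 + 1/(2μ)`; let `μ → ∞`.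
-/

open Real Filter Topology

theorem Real.add_sq_div_two_le_neg_log_one_sub {t : ℝ} (ht₀ : 0 ≤ t) (ht₁ : t < 1) :
    t + t ^ 2 / 2 ≤ -log (1 - t) := by
  have hsum := hasSum_pow_div_log_of_abs_lt_one (abs_lt.2 ⟨by linarith, ht₁⟩)
  simpa [Finset.sum_range_succ, one_add_one_eq_two] using
    sum_le_hasSum (Finset.range 2) (fun n _ => by positivity) hsum

theorem Real.one_add_inv_two_mul_le_neg_mul_log_one_sub_inv {μ : ℝ} (hμ : 1 < μ) :
    1 + 1 / (2 * μ) ≤ -(μ * log (1 - 1 / μ)) := by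
  have hμ₀ : 0 < μ := by linarith
  have h := add_sq_div_two_le_neg_log_one_sub (t := 1 / μ) (by positivity)
    ((div_lt_one hμ₀).2 hμ)
  calc 1 + 1 / (2 * μ) = μ * (1 / μ + (1 / μ) ^ 2 / 2) := by field_simp
    _ ≤ μ * -log (1 - 1 / μ) := by gcongr
    _ = -(μ * log (1 - 1 / μ)) := by ring

theorem le_half_add_of_logb_entropy_bound {c μ : ℝ} (hμ : 1 < μ) (hcμ : c < μ)
    (hb : logb 2 (exp 1 * (μ - c)) ≥ logb 2 (μ - 1) - μ * logb 2 (1 - 1 / μ)) :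
    c ≤ 1 / 2 + 1 / (2 * μ) := by
  have hμ₀ : 0 < μ := by linarith
  have hlog : log (μ - 1) - μ * log (1 - 1 / μ) ≤ 1 + log (μ - c) := by
    simp only [logb, ← mul_div_assoc, ← sub_div] at hb
    have h := (div_le_div_iff_of_pos_right (log_pos one_lt_two)).1 hb
    rwa [log_mul (exp_pos 1).ne' (by linarith), log_exp] at h
  have hlog' : log (μ - 1) + 1 / (2 * μ) ≤ log (μ - c) := by
    linarith [one_add_inv_two_mul_le_neg_mul_log_one_sub_inv hμ]
  have hexp : (μ - 1) * exp (1 / (2 * μ)) ≤ μ - c := by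
    simpa [exp_add, exp_log (by linarith : 0 < μ - 1), exp_log (by linarith : 0 < μ - c)]
      using exp_le_exp.2 hlog'
  have hlin : (μ - 1) * (1 + 1 / (2 * μ)) ≤ μ - c :=
    le_trans (by gcongr; linarith [add_one_le_exp (1 / (2 * μ))]) hexp
  have hexpand : (μ - 1) * (1 + 1 / (2 * μ)) = μ - 1 / 2 - 1 / (2 * μ) := by
    field_simp; ring
  linarith

theorem optimal_constant_le_half (c : ℝ)
    (hbound : ∀ μ : ℝ, 1 < μ →
      Real.logb 2 (Real.exp 1 * (μ - c)) ≥ Real.logb 2 (μ - 1) - μ * Real.logb 2 (1 - 1/μ)) :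
    c ≤ 1 / 2 := by
  have hlim : Tendsto (fun μ : ℝ => 1 / 2 + 1 / (2 * μ)) atTop (𝓝 (1 / 2)) := by
    simpa using tendsto_const_nhds.add
      (tendsto_inv_atTop_zero.comp (tendsto_id.const_mul_atTop (two_pos : (0 : ℝ) < 2)))
  refine ge_of_tendsto hlim ?_
  filter_upwards [eventually_gt_atTop 1, eventually_gt_atTop c] with μ hμ hcμ
  exact le_half_add_of_logb_entropy_bound hμ hcμ (hbound μ hμ)
end

section
/- For every n ≥ 1, every probability distribution p = (p_1, ..., p_n) with p_1 ≥ ... ≥ p_n > 0 and Σ p_i = 1, and every α ∈ (0, 1/2], the guessing entropy satisfies E[G(p)] ≥ (1/e)·2^{H(p) + p_n·h(α)} - α·p_n + 1/2. -/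
/-- Binary entropy function (in bits). -/
noncomputable def binaryEntropy (α : ℝ) : ℝ :=
  -α * Real.logb 2 α - (1 - α) * Real.logb 2 (1 - α)

/-!
Splitting the last mass `pₙ` of `p` into `pₙ (1 - α)` and `pₙ α`, placed at two consecutive
positions, gives a distribution `q` with entropy `H(p) + pₙ h(α)` and with
`∑ qᵢ (i + 1/2) = E[G(p)] - 1/2 + α pₙ` (positions counted from `0`). For every distribution `q`
on `0, 1, 2, …` one has `exp H(q) ≤ e ∑ qᵢ (i + 1/2)` (entropy in nats): compare `q` by Gibbs'
inequality with the weights `u e^{-u(i + 1/2)}`, `u = (∑ qᵢ (i + 1/2))⁻¹`, whose total mass is at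
most `u / (2 sinh (u / 2)) ≤ 1`.
-/

open Real Finset

lemma mul_exp_neg_half_le_one_sub_exp_neg {u : ℝ} (hu : 0 ≤ u) :
    u * exp (-(u / 2)) ≤ 1 - exp (-u) := by
  have hsinh : u / 2 ≤ sinh (u / 2) := self_le_sinh_iff.2 (by linarith)
  have hsplit : 1 - exp (-u) = 2 * sinh (u / 2) * exp (-(u / 2)) := by
    have h1 : exp (u / 2) * exp (-(u / 2)) = 1 := by rw [← exp_add]; simp
    have h2 : exp (-(u / 2)) * exp (-(u / 2)) = exp (-u) := by rw [← exp_add]; ring_nf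
    rw [sinh_eq]
    linear_combination h2 - h1
  rw [hsplit]
  exact mul_le_mul_of_nonneg_right (by linarith) (exp_pos _).le

lemma mul_sum_range_exp_neg_le_one {u : ℝ} (hu : 0 < u) (N : ℕ) :
    u * ∑ i ∈ range N, exp (-(u * (i + 1 / 2))) ≤ 1 := by
  set r := exp (-u)
  have hr : r < 1 := exp_lt_one_iff.2 (by linarith)
  have hterm : ∀ i : ℕ, exp (-(u * (i + 1 / 2))) = exp (-(u / 2)) * r ^ i := by
    intro i
    rw [← exp_nat_mul, ← exp_add]
    ring_nf
  calc u * ∑ i ∈ range N, exp (-(u * (i + 1 / 2)))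
      = u * exp (-(u / 2)) * ∑ i ∈ range N, r ^ i := by
        simp_rw [hterm, ← mul_sum, mul_assoc]
    _ ≤ (1 - r) * (r ^ 0 / (1 - r)) :=
        mul_le_mul (mul_exp_neg_half_le_one_sub_exp_neg hu.le)
          (range_eq_Ico N ▸ geom_sum_Ico_le_of_lt_one (exp_pos _).le hr)
          (sum_nonneg fun i _ => pow_nonneg (exp_pos _).le i) (by linarith)
    _ = 1 := by rw [pow_zero, mul_one_div_cancel (by linarith)]

lemma negMulLog_le_sub_sub_mul_log {a c : ℝ} (ha : 0 ≤ a) (hc : 0 < c) :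
    negMulLog a ≤ c - a - a * log c := by
  rcases ha.eq_or_lt with rfl | ha
  · simpa using hc.le
  · have hlog := log_le_sub_one_of_pos (div_pos hc ha)
    rw [log_div hc.ne' ha.ne', le_sub_iff_add_le, le_div_iff₀ ha] at hlog
    rw [negMulLog]
    linarith

theorem exp_sum_negMulLog_le_exp_one_mul {N : ℕ} {a : Fin N → ℝ} (ha : ∀ i, 0 ≤ a i)
    (hsum : ∑ i, a i = 1) :
    exp (∑ i, negMulLog (a i)) ≤ exp 1 * ∑ i, a i * (i + 1 / 2) := by
  set μ := ∑ i, a i * ((i : ℝ) + 1 / 2)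
  have hμ : 1 / 2 ≤ μ :=
    calc 1 / 2 = ∑ i, a i * (1 / 2) := by rw [← sum_mul, hsum, one_mul]
      _ ≤ μ := sum_le_sum fun i _ => mul_le_mul_of_nonneg_left (by simp) (ha i)
  set u := μ⁻¹
  have hu : 0 < u := by positivity
  set c : Fin N → ℝ := fun i => u * exp (-(u * (i + 1 / 2)))
  have hlogc : ∀ i, log (c i) = log u - u * (i + 1 / 2) := by
    intro i
    rw [log_mul hu.ne' (exp_pos _).ne', log_exp]
    ring
  have hc_sum : ∑ i, c i ≤ 1 := by
    rw [← mul_sum, Fin.sum_univ_eq_sum_range (fun i => exp (-(u * (i + 1 / 2))))]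
    exact mul_sum_range_exp_neg_le_one hu N
  have hentropy : ∑ i, negMulLog (a i) ≤ 1 + log μ :=
    calc ∑ i, negMulLog (a i) ≤ ∑ i, (c i - a i - a i * log (c i)) :=
          sum_le_sum fun i _ => negMulLog_le_sub_sub_mul_log (ha i) (by positivity)
      _ = ∑ i, c i - 1 - log u + u * μ := by
          simp only [hlogc, mul_sub, sum_sub_distrib, hsum, ← sum_mul, mul_left_comm _ u, ← mul_sum]
          ring
      _ ≤ 1 + log μ := by
          rw [log_inv, inv_mul_cancel₀ (by positivity)]
          linarith
  calc exp (∑ i, negMulLog (a i)) ≤ exp (1 + log μ) := exp_le_exp.2 hentropy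
    _ = exp 1 * μ := by rw [exp_add, exp_log (by linarith)]

noncomputable def splitLast {m : ℕ} (p : Fin (m + 1) → ℝ) (α : ℝ) : Fin (m + 2) → ℝ :=
  Fin.snoc (Fin.snoc (Fin.init p) (p (Fin.last m) * (1 - α))) (p (Fin.last m) * α)

section splitLast

variable {m : ℕ} (p : Fin (m + 1) → ℝ) (α : ℝ)

lemma sum_splitLast_apply (f : ℕ → ℝ → ℝ) :
    ∑ i : Fin (m + 2), f i (splitLast p α i) = ∑ i : Fin m, f i (p i.castSucc) +
      f m (p (Fin.last m) * (1 - α)) + f (m + 1) (p (Fin.last m) * α) := by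
  simp [splitLast, Fin.sum_univ_castSucc, Fin.init]

lemma splitLast_nonneg (hp : ∀ i, 0 ≤ p i) (hα0 : 0 ≤ α) (hα1 : α ≤ 1) (i : Fin (m + 2)) :
    0 ≤ splitLast p α i := by
  have hlast := hp (Fin.last m)
  refine Fin.lastCases ?_ (Fin.lastCases ?_ fun j => ?_) i
  · simpa [splitLast] using mul_nonneg hlast hα0
  · simpa [splitLast] using mul_nonneg hlast (sub_nonneg.2 hα1)
  · simpa [splitLast, Fin.init] using hp j.castSucc

lemma sum_splitLast : ∑ i, splitLast p α i = ∑ i, p i := by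
  rw [sum_splitLast_apply p α fun _ x => x, Fin.sum_univ_castSucc]
  ring

lemma sum_negMulLog_splitLast :
    ∑ i, negMulLog (splitLast p α i) = ∑ i, negMulLog (p i) + p (Fin.last m) * binEntropy α := by
  rw [sum_splitLast_apply p α fun _ x => negMulLog x, Fin.sum_univ_castSucc,
    negMulLog_mul, negMulLog_mul, binEntropy_eq_negMulLog_add_negMulLog_one_sub]
  ring

lemma sum_splitLast_mul_add_half :
    ∑ i, splitLast p α i * (i + 1 / 2) = ∑ i, p i * (i + 1 / 2) + α * p (Fin.last m) := by
  rw [sum_splitLast_apply p α fun i x => x * (i + 1 / 2), Fin.sum_univ_castSucc]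
  simp only [Fin.val_castSucc, Fin.val_last]
  push_cast
  ring

end splitLast

lemma shannonEntropy_mul_log_two {n : ℕ} (p : Fin n → ℝ) :
    shannonEntropy p * log 2 = ∑ i, negMulLog (p i) := by
  simp only [shannonEntropy, logb, negMulLog, neg_mul, sum_neg_distrib, sum_mul]
  congr 1
  refine sum_congr rfl fun i _ => ?_
  field_simp

lemma binaryEntropy_mul_log_two (α : ℝ) : binaryEntropy α * log 2 = binEntropy α := by
  rw [binaryEntropy, binEntropy, logb, logb, log_inv, log_inv]
  field_simp
  ring

lemma guessingEntropy_eq_sum_mul_add_half {n : ℕ} {p : Fin n → ℝ} (hsum : ∑ i, p i = 1) :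
    guessingEntropy p = ∑ i, p i * (i + 1 / 2) + 1 / 2 :=
  calc guessingEntropy p = ∑ i, (p i * (i + 1 / 2) + p i * (1 / 2)) :=
        sum_congr rfl fun i _ => by ring
    _ = _ := by rw [sum_add_distrib, ← sum_mul, hsum, one_mul]

theorem two_rpow_shannonEntropy_add_le {m : ℕ} {p : Fin (m + 1) → ℝ} (hp : ∀ i, 0 ≤ p i)
    (hsum : ∑ i, p i = 1) {α : ℝ} (hα0 : 0 ≤ α) (hα1 : α ≤ 1) :
    (2 : ℝ) ^ (shannonEntropy p + p (Fin.last m) * binaryEntropy α) ≤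
      exp 1 * (guessingEntropy p - 1 / 2 + α * p (Fin.last m)) :=
  calc (2 : ℝ) ^ (shannonEntropy p + p (Fin.last m) * binaryEntropy α)
      = exp (∑ i, negMulLog (splitLast p α i)) := by
        rw [rpow_def_of_pos two_pos, sum_negMulLog_splitLast, ← shannonEntropy_mul_log_two,
          ← binaryEntropy_mul_log_two]
        ring_nf
    _ ≤ exp 1 * ∑ i, splitLast p α i * (i + 1 / 2) :=
        exp_sum_negMulLog_le_exp_one_mul (splitLast_nonneg p α hp hα0 hα1)
          (by rw [sum_splitLast, hsum])
    _ = exp 1 * (guessingEntropy p - 1 / 2 + α * p (Fin.last m)) := by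
        rw [sum_splitLast_mul_add_half, guessingEntropy_eq_sum_mul_add_half hsum,
          add_sub_cancel_right]

theorem refined_rioul_one_split (n : ℕ) (hn : 1 ≤ n) (p : Fin n → ℝ)
    (hpos : ∀ i, 0 < p i)
    (hsum : ∑ i, p i = 1)
    (α : ℝ) (hα0 : 0 < α) (hα : α ≤ 1/2) :
    guessingEntropy p ≥
      (1 / Real.exp 1) *
          (2 : ℝ) ^ (shannonEntropy p + p ⟨n - 1, by omega⟩ * binaryEntropy α) -
        α * p ⟨n - 1, by omega⟩ + 1 / 2 := by
  obtain ⟨m, rfl⟩ : ∃ m, n = m + 1 := ⟨n - 1, by omega⟩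
  have key := two_rpow_shannonEntropy_add_le (fun i => (hpos i).le) hsum hα0.le (by linarith)
  rw [← div_le_iff₀' (exp_pos 1)] at key
  change _ ≥ 1 / exp 1 * 2 ^ (shannonEntropy p + p (Fin.last m) * binaryEntropy α) -
    α * p (Fin.last m) + 1 / 2
  rw [one_div_mul_eq_div]
  linarith
end

section
/- For all real numbers H ≥ 1, α ∈ (0, 1/2], and w ∈ (0, 1], one has (1/e)·2^{H + w·h(α)} - α·w ≥ (1/e)·2^{H}, where h is the binary entropy function. -/
/-- Key entropy bound in nats: 2·(natural binary entropy) ≥ e·α on (0, 1/2]. -/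
lemma ent_key (α : ℝ) (h0 : 0 < α) (h2 : α ≤ 1/2) :
    Real.exp 1 * α ≤ 2 * (-α * Real.log α - (1 - α) * Real.log (1 - α)) := by
  have h1 : 0 < 1 - α := by linarith
  have l1 : Real.log 2 + Real.log α ≤ 2 * α - 1 := by
    have h := Real.log_le_sub_one_of_pos (show (0:ℝ) < 2 * α by linarith)
    rw [Real.log_mul two_ne_zero h0.ne'] at h
    linarith
  have l3 : Real.log (1 - α) ≤ -α := by
    have h := Real.log_le_sub_one_of_pos h1
    linarith
  have he : Real.exp 1 < 2.7182818286 := Real.exp_one_lt_d9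
  have hl : 0.6931471803 < Real.log 2 := Real.log_two_gt_d9
  have A : α * (Real.log 2 + Real.log α) ≤ α * (2 * α - 1) :=
    mul_le_mul_of_nonneg_left l1 h0.le
  rcases le_or_gt α (1/3) with hc | hc
  · have B : (1 - α) * Real.log (1 - α) ≤ (1 - α) * (-α) :=
      mul_le_mul_of_nonneg_left l3 h1.le
    nlinarith [mul_pos h0 h1, sq_nonneg α]
  · have l2 : Real.log 2 + Real.log (1 - α) ≤ 1 - 2 * α := by
      have h := Real.log_le_sub_one_of_pos (show (0:ℝ) < 2 * (1 - α) by linarith)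
      rw [Real.log_mul two_ne_zero h1.ne'] at h
      linarith
    have B : (1 - α) * (Real.log 2 + Real.log (1 - α)) ≤ (1 - α) * (1 - 2 * α) :=
      mul_le_mul_of_nonneg_left l2 h1.le
    nlinarith [mul_nonneg (show (0:ℝ) ≤ α - 1/3 by linarith) (show (0:ℝ) ≤ 1/2 - α by linarith)]

theorem per_step_monotonicity (H α w : ℝ) (hH : 1 ≤ H)
    (hα0 : 0 < α) (hα : α ≤ 1/2) (hw0 : 0 < w) (hw : w ≤ 1) :
    (1 / Real.exp 1) * (2 : ℝ) ^ (H + w * binaryEntropy α) - α * w ≥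
      (1 / Real.exp 1) * (2 : ℝ) ^ H := by
  have h1 : (0:ℝ) < 1 - α := by linarith
  have hlog2 : (0:ℝ) < Real.log 2 := Real.log_pos (by norm_num)
  have hkey : Real.exp 1 * α ≤ 2 * (binaryEntropy α * Real.log 2) := by
    have := ent_key α hα0 hα
    have heq : binaryEntropy α * Real.log 2
        = -α * Real.log α - (1 - α) * Real.log (1 - α) := by
      unfold binaryEntropy Real.logb
      field_simp
    rw [heq]
    exact this
  have hhe : (0:ℝ) < Real.exp 1 := Real.exp_pos 1
  have hB0 : 0 ≤ binaryEntropy α := by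
    nlinarith [mul_pos hhe hα0]
  have hsplit : (2:ℝ) ^ (H + w * binaryEntropy α)
      = (2:ℝ) ^ H * (2:ℝ) ^ (w * binaryEntropy α) := Real.rpow_add (by norm_num) _ _
  have hexp : (2:ℝ) ^ (w * binaryEntropy α)
      = Real.exp (Real.log 2 * (w * binaryEntropy α)) :=
    Real.rpow_def_of_pos (by norm_num) _
  have hlin : 1 + Real.log 2 * (w * binaryEntropy α)
      ≤ (2:ℝ) ^ (w * binaryEntropy α) := by
    rw [hexp]
    have := Real.add_one_le_exp (Real.log 2 * (w * binaryEntropy α))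
    linarith
  have h2H : (2:ℝ) ≤ (2:ℝ) ^ H := by
    calc (2:ℝ) = (2:ℝ) ^ (1:ℝ) := by norm_num
    _ ≤ (2:ℝ) ^ H := Real.rpow_le_rpow_of_exponent_le (by norm_num) hH
  have h2Hpos : (0:ℝ) < (2:ℝ) ^ H := Real.rpow_pos_of_pos (by norm_num) H
  rw [hsplit, ge_iff_le, ← sub_nonneg]
  have hwB : 0 ≤ Real.log 2 * (w * binaryEntropy α) :=
    mul_nonneg hlog2.le (mul_nonneg hw0.le hB0)
  have step1 : (2:ℝ) ^ H * (Real.log 2 * (w * binaryEntropy α))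
      ≤ (2:ℝ) ^ H * ((2:ℝ) ^ (w * binaryEntropy α) - 1) := by
    apply mul_le_mul_of_nonneg_left _ h2Hpos.le
    linarith
  have step2 : 2 * (Real.log 2 * (w * binaryEntropy α))
      ≤ (2:ℝ) ^ H * (Real.log 2 * (w * binaryEntropy α)) :=
    mul_le_mul_of_nonneg_right h2H hwB
  have step3 : Real.exp 1 * (α * w) ≤ 2 * (Real.log 2 * (w * binaryEntropy α)) := by
    nlinarith [mul_le_mul_of_nonneg_right hkey hw0.le]
  have hfinal : Real.exp 1 * (α * w)
      ≤ (2:ℝ) ^ H * ((2:ℝ) ^ (w * binaryEntropy α) - 1) := by linarith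
  have : α * w ≤ (1 / Real.exp 1) * ((2:ℝ) ^ H * ((2:ℝ) ^ (w * binaryEntropy α) - 1)) := by
    rw [div_mul_eq_mul_div, one_mul, le_div_iff₀ hhe]
    nlinarith
  nlinarith [this]
end

section
/- For every n ≥ 2 and every probability distribution p = (p_1, ..., p_n) with p_1 ≥ ... ≥ p_n > 0, Σ p_i = 1, and guessing entropy μ = E[G(p)] > 1, the Shannon entropy satisfies the strict inequality H(p) < log₂(μ - 1) - μ·log₂(1 - 1/μ). -/
theorem entropy_lt_geometric_max (n : ℕ) (hn : 2 ≤ n) (p : Fin n → ℝ)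
    (hdesc : ∀ i j : Fin n, i ≤ j → p j ≤ p i)
    (hpos : ∀ i, 0 < p i)
    (hsum : ∑ i, p i = 1)
    (hμ : 1 < guessingEntropy p) :
    shannonEntropy p <
      Real.logb 2 (guessingEntropy p - 1) -
        guessingEntropy p * Real.logb 2 (1 - 1 / guessingEntropy p) := by
  set μ := guessingEntropy p with hμdef
  have hμ0 : (0:ℝ) < μ := lt_trans one_pos hμ
  have hr0 : (0:ℝ) < 1 - 1/μ := by
    rw [sub_pos, div_lt_one hμ0]; exact hμ
  set r : ℝ := 1 - 1/μ with hrdef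
  have hr1 : r < 1 := by
    have h1 : (0:ℝ) < 1/μ := by positivity
    rw [hrdef]; linarith
  have hrμ : μ * r = μ - 1 := by
    rw [hrdef]; field_simp
  have hμ1pos : (0:ℝ) < μ - 1 := by linarith
  -- sum of indices
  have hidx : ∑ i : Fin n, ((i:ℕ):ℝ) * p i = μ - 1 := by
    have h1 : μ = ∑ i : Fin n, (((i:ℕ):ℝ) + 1) * p i := rfl
    have h2 : ∑ i : Fin n, (((i:ℕ):ℝ) + 1) * p i
        = ∑ i : Fin n, (((i:ℕ):ℝ) * p i + p i) := by
      apply Finset.sum_congr rfl; intro i _; ring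
    rw [h1, h2, Finset.sum_add_distrib, hsum]; ring
  set q : Fin n → ℝ := fun i => (1/μ) * r^(i:ℕ) with hqdef
  have hq0 : ∀ i, 0 < q i := fun i => by
    rw [hqdef]; positivity
  have hqsum : ∑ i, q i = 1 - r^n := by
    rw [hqdef, ← Finset.mul_sum, Fin.sum_univ_eq_sum_range (fun i => r^i),
      geom_sum_eq (ne_of_lt hr1)]
    have h1r : (1:ℝ)/μ = 1 - r := by rw [hrdef]; ring
    rw [h1r]
    have hne : r - 1 ≠ 0 := sub_ne_zero.mpr (ne_of_lt hr1)
    field_simp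
    ring
  have hqlt : ∑ i, q i - 1 < 0 := by
    rw [hqsum]
    have : (0:ℝ) < r^n := pow_pos hr0 n
    linarith
  -- Gibbs-type inequality
  have key : ∑ i, p i * (Real.log (q i) - Real.log (p i)) < 0 := by
    have h1 : ∑ i, p i * (Real.log (q i) - Real.log (p i)) ≤ ∑ i, (q i - p i) := by
      apply Finset.sum_le_sum; intro i _
      have hlog : Real.log (q i / p i) ≤ q i / p i - 1 :=
        Real.log_le_sub_one_of_pos (div_pos (hq0 i) (hpos i))
      have hdiv : Real.log (q i / p i) = Real.log (q i) - Real.log (p i) :=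
        Real.log_div (ne_of_gt (hq0 i)) (ne_of_gt (hpos i))
      rw [← hdiv]
      calc p i * Real.log (q i / p i) ≤ p i * (q i / p i - 1) :=
            mul_le_mul_of_nonneg_left hlog (le_of_lt (hpos i))
        _ = q i - p i := by
            rw [mul_sub, mul_div_cancel₀ _ (ne_of_gt (hpos i)), mul_one]
    have h2 : ∑ i, (q i - p i) = ∑ i, q i - 1 := by
      rw [Finset.sum_sub_distrib, hsum]
    linarith
  have key2 : ∑ i, p i * Real.log (q i) - ∑ i, p i * Real.log (p i) < 0 := by
    have h : ∑ i, p i * (Real.log (q i) - Real.log (p i))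
        = ∑ i, p i * Real.log (q i) - ∑ i, p i * Real.log (p i) := by
      rw [← Finset.sum_sub_distrib]
      apply Finset.sum_congr rfl; intro i _; ring
    linarith [key, h.symm ▸ key]
  -- compute ∑ p log q
  have hlogq : ∀ i : Fin n, Real.log (q i) = -Real.log μ + ((i:ℕ):ℝ) * Real.log r := by
    intro i
    rw [hqdef]
    rw [Real.log_mul (by positivity) (by positivity), Real.log_pow, one_div,
      Real.log_inv]
  have hsumlogq : ∑ i, p i * Real.log (q i) = -Real.log μ + (μ - 1) * Real.log r := by
    have h1 : ∑ i, p i * Real.log (q i)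
        = ∑ i, (-(Real.log μ) * p i + Real.log r * (((i:ℕ):ℝ) * p i)) := by
      apply Finset.sum_congr rfl; intro i _; rw [hlogq i]; ring
    rw [h1, Finset.sum_add_distrib, ← Finset.mul_sum, ← Finset.mul_sum, hsum, hidx]
    ring
  -- rewrite goal in terms of Real.log
  have hL2 : (0:ℝ) < Real.log 2 := Real.log_pos (by norm_num)
  have hlogμ1 : Real.log (μ - 1) = Real.log μ + Real.log r := by
    rw [← hrμ, Real.log_mul (ne_of_gt hμ0) (ne_of_gt hr0)]
  have hmain : -∑ i, p i * Real.log (p i) < Real.log (μ - 1) - μ * Real.log r := by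
    rw [hlogμ1]
    have : Real.log μ + Real.log r - μ * Real.log r
        = -(-Real.log μ + (μ - 1) * Real.log r) := by ring
    rw [this, ← hsumlogq]
    linarith [key2]
  have hES : shannonEntropy p = (-∑ i, p i * Real.log (p i)) / Real.log 2 := by
    unfold shannonEntropy
    rw [neg_div]
    congr 1
    rw [Finset.sum_div]
    apply Finset.sum_congr rfl; intro i _
    rw [Real.logb, mul_div_assoc]
  have hRHS : Real.logb 2 (μ - 1) - μ * Real.logb 2 (1 - 1/μ)
      = (Real.log (μ - 1) - μ * Real.log r) / Real.log 2 := by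
    rw [Real.logb, Real.logb, ← hrdef]
    field_simp
  rw [hES, hRHS]
  exact (div_lt_div_iff_of_pos_right hL2).mpr hmain
end
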